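/- Let n ≥ 1 and let ρ : ℝ^n → [0,∞) satisfy A := ∑_{j∈ℤ} (ess sup_{2^j ≤ |x| < 2^{j+1}} ρ(x))² < ∞. Then there is a constant C depending only on n such that for every measurable h : ℝ^n × ℝ → ℂ, ∫_ℝ ∫_{ℝ^n} ρ(x)² |x|^{−1} |h(x,t)|² dx dt ≤ C A · sup_{R>0} (1/R) ∫_{|x|<R} ∫_ℝ |h(x,t)|² dt dx. -/

import Mathlib

open MeasureTheory ENNReal NNReal

/-- The squared essential suprema of `ρ` over the dyadic annuli `{2^j ≤ |x| < 2^{j+1}}`,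
summed over `j ∈ ℤ`. -/
noncomputable def dyadicSupSum (n : ℕ) (ρ : EuclideanSpace ℝ (Fin n) → ℝ) : ℝ≥0∞ :=
  ∑' j : ℤ,
    (essSup (fun x => ENNReal.ofReal (ρ x))
        (volume.restrict
          {x : EuclideanSpace ℝ (Fin n) | (2 : ℝ) ^ j ≤ ‖x‖ ∧ ‖x‖ < (2 : ℝ) ^ (j + 1)})) ^ 2

/-!
On the annulus `2^j ≤ |x| < 2^{j+1}` the weight `ρ² |x|⁻¹` is at most `M_j² 2^{-j}`, where `M_j`
is the essential supremum of `ρ` there, while the annulus lies in the ball of radius `2^{j+1}`,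
on which the local smoothing norm `S` bounds the space-time mass of `|h|²` by `2^{j+1} S` (Tonelli
exchanges the two integrals on each annulus). Summing over the annuli gives
`∑_j M_j² 2^{-j} 2^{j+1} S = 2 A S`.
-/

open Set

def dyadicAnnulus (E : Type*) [Norm E] (j : ℤ) : Set E :=
  {x | (2 : ℝ) ^ j ≤ ‖x‖ ∧ ‖x‖ < (2 : ℝ) ^ (j + 1)}

section Annuli

variable {E : Type*} [NormedAddCommGroup E]

theorem iUnion_dyadicAnnulus : ⋃ j, dyadicAnnulus E j = {0}ᶜ := by
  ext x
  simp only [mem_iUnion, mem_compl_iff, mem_singleton_iff]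
  refine ⟨fun ⟨j, hj, _⟩ hx => ?_, fun hx => exists_mem_Ico_zpow (norm_pos_iff.2 hx) one_lt_two⟩
  rw [hx, norm_zero] at hj
  exact (zpow_pos two_pos j).not_ge hj

variable [MeasurableSpace E] [OpensMeasurableSpace E]

theorem measurableSet_dyadicAnnulus (j : ℤ) :
    MeasurableSet (dyadicAnnulus E j) :=
  (measurableSet_le measurable_const measurable_norm).inter
    (measurableSet_lt measurable_norm measurable_const)

variable (μ : Measure E)

noncomputable def annulusEssSup (ρ : E → ℝ) (j : ℤ) : ℝ≥0∞ :=
  essSup (fun x => ENNReal.ofReal (ρ x)) (μ.restrict (dyadicAnnulus E j))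

theorem ae_restrict_dyadicAnnulus_weight_le {ρ : E → ℝ} (hρ : ∀ x, 0 ≤ ρ x) (j : ℤ) :
    ∀ᵐ x ∂μ.restrict (dyadicAnnulus E j),
      ENNReal.ofReal (ρ x ^ 2 * ‖x‖⁻¹) ≤ annulusEssSup μ ρ j ^ 2 * ENNReal.ofReal (2 ^ (-j)) := by
  filter_upwards [ENNReal.ae_le_essSup (fun x => ENNReal.ofReal (ρ x)),
    ae_restrict_mem (measurableSet_dyadicAnnulus j)] with x hρx hx
  have hnorm_inv : ‖x‖⁻¹ ≤ (2 : ℝ) ^ (-j) := by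
    rw [zpow_neg]
    exact inv_anti₀ (zpow_pos two_pos j) hx.1
  rw [ENNReal.ofReal_mul (sq_nonneg _), ENNReal.ofReal_pow (hρ x)]
  exact mul_le_mul' (pow_le_pow_left' hρx 2) (ENNReal.ofReal_le_ofReal hnorm_inv)

theorem lintegral_weight_mul_le_tsum {ρ : E → ℝ} (hρ : ∀ x, 0 ≤ ρ x) {F : E → ℝ≥0∞}
    (hF : Measurable F) :
    ∫⁻ x, ENNReal.ofReal (ρ x ^ 2 * ‖x‖⁻¹) * F x ∂μ ≤
      ∑' j, annulusEssSup μ ρ j ^ 2 * ENNReal.ofReal (2 ^ (-j)) *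
        ∫⁻ x in dyadicAnnulus E j, F x ∂μ := by
  -- `‖0‖⁻¹ = 0`, so the weight vanishes at the origin, the one point outside the annuli.
  have hsupport : (fun x => ENNReal.ofReal (ρ x ^ 2 * ‖x‖⁻¹) * F x).support ⊆ {0}ᶜ := by
    intro x hx hx0
    rw [mem_singleton_iff.1 hx0] at hx
    simp at hx
  rw [← setLIntegral_eq_of_support_subset hsupport, ← iUnion_dyadicAnnulus]
  refine (lintegral_iUnion_le _ _).trans (ENNReal.tsum_le_tsum fun j => ?_)
  rw [← lintegral_const_mul _ hF]
  exact lintegral_mono_ae <|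
    (ae_restrict_dyadicAnnulus_weight_le μ hρ j).mono fun x hx => by gcongr

end Annuli

section BallAverages

variable {E : Type*} [NormedAddCommGroup E] [MeasurableSpace E] (μ : Measure E)

noncomputable def ballAverageSup (F : E → ℝ≥0∞) : ℝ≥0∞ :=
  ⨆ (R : ℝ) (_ : 0 < R), (ENNReal.ofReal R)⁻¹ * ∫⁻ x in {x : E | ‖x‖ < R}, F x ∂μ

theorem setLIntegral_norm_lt_le_mul_ballAverageSup (F : E → ℝ≥0∞) {R : ℝ} (hR : 0 < R) :
    ∫⁻ x in {x : E | ‖x‖ < R}, F x ∂μ ≤ ENNReal.ofReal R * ballAverageSup μ F := by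
  rw [← ENNReal.div_le_iff' (by simpa using hR) ofReal_ne_top, ENNReal.div_eq_inv_mul]
  exact le_iSup₂_of_le R hR le_rfl

theorem tsum_mul_setLIntegral_dyadicAnnulus_le (M : ℤ → ℝ≥0∞) (F : E → ℝ≥0∞) :
    ∑' j, M j * ENNReal.ofReal (2 ^ (-j)) * ∫⁻ x in dyadicAnnulus E j, F x ∂μ ≤
      2 * (∑' j, M j) * ballAverageSup μ F := by
  rw [mul_comm 2, mul_assoc, ← ENNReal.tsum_mul_right]
  refine ENNReal.tsum_le_tsum fun j => ?_
  have hscale : ENNReal.ofReal (2 ^ (-j)) * ENNReal.ofReal (2 ^ (j + 1)) = 2 := by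
    rw [← ENNReal.ofReal_mul (by positivity), ← zpow_add₀ two_ne_zero]
    norm_num
  calc M j * ENNReal.ofReal (2 ^ (-j)) * ∫⁻ x in dyadicAnnulus E j, F x ∂μ
      ≤ M j * ENNReal.ofReal (2 ^ (-j)) *
          (ENNReal.ofReal (2 ^ (j + 1)) * ballAverageSup μ F) := by
        gcongr
        refine (lintegral_mono_set fun x hx => hx.2).trans ?_
        exact setLIntegral_norm_lt_le_mul_ballAverageSup μ F (zpow_pos two_pos _)
    _ = M j * (2 * ballAverageSup μ F) := by rw [← hscale]; ring

end BallAverages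

theorem lintegral_tsum_mul_setLIntegral_comm {α β ι : Type*} [MeasurableSpace α]
    [MeasurableSpace β] [Countable ι] {μ : Measure α} {ν : Measure β} [SFinite μ] [SFinite ν]
    {G : α → β → ℝ≥0∞} (hG : Measurable (Function.uncurry G)) (c : ι → ℝ≥0∞)
    (s : ι → Set α) :
    ∫⁻ t, ∑' i, c i * ∫⁻ x in s i, G x t ∂μ ∂ν = ∑' i, c i * ∫⁻ x in s i, ∫⁻ t, G x t ∂ν ∂μ := by
  have hslice : ∀ i, Measurable fun t => ∫⁻ x in s i, G x t ∂μ := fun i => hG.lintegral_prod_left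
  rw [lintegral_tsum fun i => ((hslice i).const_mul (c i)).aemeasurable]
  congr 1 with i
  rw [lintegral_const_mul _ (hslice i), lintegral_lintegral_swap hG.aemeasurable]

theorem local_smoothing_to_weighted_general
    (n : ℕ) :
    ∃ C : ℝ≥0, 0 < C ∧
      ∀ ρ : EuclideanSpace ℝ (Fin n) → ℝ, (∀ x, 0 ≤ ρ x) →
        dyadicSupSum n ρ ≠ ⊤ →
        ∀ h : EuclideanSpace ℝ (Fin n) → ℝ → ℂ, Measurable (Function.uncurry h) →
          (∫⁻ t : ℝ, ∫⁻ x : EuclideanSpace ℝ (Fin n),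
              ENNReal.ofReal (ρ x ^ 2 * ‖x‖⁻¹) * (‖h x t‖₊ : ℝ≥0∞) ^ 2)
            ≤ C * dyadicSupSum n ρ *
              ⨆ (R : ℝ) (_ : 0 < R),
                (ENNReal.ofReal R)⁻¹ *
                  ∫⁻ x in {x : EuclideanSpace ℝ (Fin n) | ‖x‖ < R},
                    ∫⁻ t : ℝ, (‖h x t‖₊ : ℝ≥0∞) ^ 2 := by
  refine ⟨2, two_pos, fun ρ hρ _ h hh => ?_⟩
  have hG : Measurable (Function.uncurry fun x t => (‖h x t‖₊ : ℝ≥0∞) ^ 2) :=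
    hh.nnnorm.coe_nnreal_ennreal.pow_const 2
  calc _ ≤ ∫⁻ t : ℝ, ∑' j, annulusEssSup volume ρ j ^ 2 * ENNReal.ofReal (2 ^ (-j)) *
          ∫⁻ x in dyadicAnnulus _ j, (‖h x t‖₊ : ℝ≥0∞) ^ 2 :=
        lintegral_mono fun t => lintegral_weight_mul_le_tsum volume hρ hG.of_uncurry_right
    _ = ∑' j, annulusEssSup volume ρ j ^ 2 * ENNReal.ofReal (2 ^ (-j)) *
          ∫⁻ x in dyadicAnnulus _ j, ∫⁻ t : ℝ, (‖h x t‖₊ : ℝ≥0∞) ^ 2 :=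
        lintegral_tsum_mul_setLIntegral_comm hG _ _
    _ ≤ 2 * dyadicSupSum n ρ * ballAverageSup volume fun x => ∫⁻ t : ℝ, (‖h x t‖₊ : ℝ≥0∞) ^ 2 :=
        tsum_mul_setLIntegral_dyadicAnnulus_le volume _ _
    _ = _ := by rw [ENNReal.coe_ofNat]; rfl

theorem local_smoothing_to_weighted
    (n : ℕ) (hn : 1 ≤ n) :
    ∃ C : ℝ≥0, 0 < C ∧
      ∀ ρ : EuclideanSpace ℝ (Fin n) → ℝ, (∀ x, 0 ≤ ρ x) →
        dyadicSupSum n ρ ≠ ⊤ →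
        ∀ h : EuclideanSpace ℝ (Fin n) → ℝ → ℂ, Measurable (Function.uncurry h) →
          (∫⁻ t : ℝ, ∫⁻ x : EuclideanSpace ℝ (Fin n),
              ENNReal.ofReal (ρ x ^ 2 * ‖x‖⁻¹) * (‖h x t‖₊ : ℝ≥0∞) ^ 2)
            ≤ C * dyadicSupSum n ρ *
              ⨆ (R : ℝ) (_ : 0 < R),
                (ENNReal.ofReal R)⁻¹ *
                  ∫⁻ x in {x : EuclideanSpace ℝ (Fin n) | ‖x‖ < R},
                    ∫⁻ t : ℝ, (‖h x t‖₊ : ℝ≥0∞) ^ 2 :=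
  local_smoothing_to_weighted_general n
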